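/- Dodgson's condensation rule: for any n × n matrix A = (a_{i,j}) with entries in a commutative ring and n ≥ 2, det(A) · det(A with first and last rows and columns removed) = det(A with last row and column removed) · det(A with first row and column removed) − det(A with last row and first column removed) · det(A with first row and last column removed). (For n = 2 the middle determinant, of the empty 0×0 matrix, is 1.) -/

import Mathlib

/-!
This is the `2 × 2` case of Jacobi's complementary minor theorem. Multiplying `A` by the identity
matrix with its columns `0` and `n - 1` replaced by those of `adjugate A` turns these two columns of
`A` into `det A` times unit vectors, so taking determinants gives
`det A * D = (det A) ^ 2 * det A[mid, mid]`, where `D` is the minor of `adjugate A` on rows and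
columns `{0, n - 1}`. Cancelling one `det A` is legitimate for the generic matrix over
`MvPolynomial _ ℤ`, a domain, and the result then specialises to every commutative ring. The four
entries of `D` are, up to signs that cancel, the four minors on the right-hand side.
-/

/-- Embedding of `Fin (n-1)` into `Fin n` keeping the low indices `0,…,n-2`
    (removing the last row/column). -/
def lo {n : ℕ} (i : Fin (n - 1)) : Fin n := ⟨i, by have := i.isLt; omega⟩

/-- Embedding of `Fin (n-1)` into `Fin n` keeping the high indices `1,…,n-1`
    (removing the first row/column). -/
def hi {n : ℕ} (i : Fin (n - 1)) : Fin n := ⟨i + 1, by have := i.isLt; omega⟩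

/-- Embedding of `Fin (n-2)` into `Fin n` keeping the middle indices `1,…,n-2`
    (removing the first and last rows/columns). -/
def mid {n : ℕ} (i : Fin (n - 2)) : Fin n := ⟨i + 1, by have := i.isLt; omega⟩

namespace Matrix

variable {R : Type*} [CommRing R] {o κ : Type*} [Fintype o] [Fintype κ] [DecidableEq o]
  [DecidableEq κ]

theorem det_mul_det_toBlocks₁₁_adjugate (A : Matrix (o ⊕ κ) (o ⊕ κ) R) :
    A.det * (adjugate A).toBlocks₁₁.det = A.det ^ Fintype.card o * A.toBlocks₂₂.det := by
  set B := adjugate A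
  have hAB : A * B = A.det • 1 := mul_adjugate A
  conv_lhs at hAB => rw [← fromBlocks_toBlocks A, ← fromBlocks_toBlocks B]
  rw [fromBlocks_multiply, ← fromBlocks_one, fromBlocks_smul, fromBlocks_inj] at hAB
  obtain ⟨h₁₁, -, h₂₁, -⟩ := hAB
  calc A.det * B.toBlocks₁₁.det = (A * fromBlocks B.toBlocks₁₁ 0 B.toBlocks₂₁ 1).det := by
        rw [det_mul, det_fromBlocks_zero₁₂, det_one, mul_one]
    _ = (fromBlocks (A.det • 1) A.toBlocks₁₂ 0 A.toBlocks₂₂).det := by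
        conv_lhs => rw [← fromBlocks_toBlocks A]
        rw [fromBlocks_multiply, h₁₁, h₂₁]
        simp
    _ = A.det ^ Fintype.card o * A.toBlocks₂₂.det := by
        rw [det_fromBlocks_zero₂₁, det_smul, det_one, mul_one]

theorem det_toBlocks₁₁_adjugate [Nonempty o] (A : Matrix (o ⊕ κ) (o ⊕ κ) R) :
    (adjugate A).toBlocks₁₁.det = A.det ^ (Fintype.card o - 1) * A.toBlocks₂₂.det := by
  let X := mvPolynomialX (o ⊕ κ) (o ⊕ κ) ℤ
  suffices hX : (adjugate X).toBlocks₁₁.det = X.det ^ (Fintype.card o - 1) * X.toBlocks₂₂.det by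
    let f := MvPolynomial.eval₂Hom (Int.castRingHom R) fun p : (o ⊕ κ) × (o ⊕ κ) => A p.1 p.2
    have hfX : f.mapMatrix X = A := mvPolynomialX_map_eval₂ _ A
    have hf := congrArg f hX
    rwa [map_mul, map_pow, RingHom.map_det, RingHom.map_det, RingHom.map_det,
      show f.mapMatrix (adjugate X).toBlocks₁₁ = (f.mapMatrix (adjugate X)).toBlocks₁₁ from rfl,
      show f.mapMatrix X.toBlocks₂₂ = (f.mapMatrix X).toBlocks₂₂ from rfl,
      RingHom.map_adjugate, hfX] at hf
  apply mul_left_cancel₀ (det_mvPolynomialX_ne_zero (o ⊕ κ) ℤ)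
  rw [det_mul_det_toBlocks₁₁_adjugate, ← mul_assoc, ← pow_succ',
    Nat.sub_add_cancel Fintype.card_pos]

end Matrix

open Matrix

noncomputable def finEndsSumMidEquiv (m : ℕ) : Fin 2 ⊕ Fin m ≃ Fin (m + 2) :=
  Equiv.ofBijective (Sum.elim ![0, Fin.last (m + 1)] (mid (n := m + 2))) <| by
    rw [Fintype.bijective_iff_injective_and_card]
    refine ⟨Function.Injective.sumElim ?_ ?_ ?_, by simp [add_comm]⟩
    · intro i j h
      fin_cases i <;> fin_cases j <;> simp_all [Fin.ext_iff]
    · intro k l h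
      simpa [mid, Fin.ext_iff] using h
    · intro i k
      fin_cases i <;> simp [mid, Fin.ext_iff]
      omega

section

variable {R : Type*} [CommRing R] {m : ℕ}

theorem det_adjugate_submatrix_zero_last (A : Matrix (Fin (m + 2)) (Fin (m + 2)) R) :
    ((adjugate A).submatrix ![0, Fin.last (m + 1)] ![0, Fin.last (m + 1)]).det =
      A.det * (A.submatrix mid mid).det := by
  have h := det_toBlocks₁₁_adjugate (A.submatrix (finEndsSumMidEquiv m) (finEndsSumMidEquiv m))
  rwa [adjugate_submatrix_equiv_self, det_submatrix_equiv_self, Fintype.card_fin, pow_one] at h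

theorem dodgson_condensation_fin (A : Matrix (Fin (m + 2)) (Fin (m + 2)) R) :
    A.det * (A.submatrix mid mid).det =
      (A.submatrix lo lo).det * (A.submatrix hi hi).det -
        (A.submatrix lo hi).det * (A.submatrix hi lo).det := by
  have hlo : (Fin.last (m + 1)).succAbove = (lo : Fin (m + 2 - 1) → _) := by ext; simp [lo]
  have hhi : (0 : Fin (m + 2)).succAbove = (hi : Fin (m + 2 - 1) → _) := by ext; simp [hi]
  rw [← det_adjugate_submatrix_zero_last, det_fin_two]
  have hsign : (-1 : R) ^ (m + 1) * (-1) ^ (m + 1) = 1 := by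
    rw [← mul_pow, neg_one_mul, neg_neg, one_pow]
  simp only [submatrix_apply, cons_val_zero, cons_val_one, cons_val_fin_one,
    adjugate_fin_succ_eq_det_submatrix, Fin.val_zero, Fin.val_last, add_zero, zero_add, pow_zero,
    one_mul, Even.add_self, Even.neg_pow, one_pow, hlo, hhi]
  linear_combination -(A.submatrix lo hi).det * (A.submatrix hi lo).det * hsign

end

theorem dodgson_condensation {R : Type*} [CommRing R] {n : ℕ} (hn : 2 ≤ n)
    (A : Matrix (Fin n) (Fin n) R) :
    A.det * (A.submatrix mid mid).det =
      (A.submatrix lo lo).det * (A.submatrix hi hi).det -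
        (A.submatrix lo hi).det * (A.submatrix hi lo).det := by
  obtain ⟨m, rfl⟩ := Nat.exists_eq_add_of_le' hn
  exact dodgson_condensation_fin A
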